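/- For the root system B_l realized in ℝ^l with simple roots α_j = e_j − e_{j+1} (j < l), α_l = e_l, define ζ_j^{1/2} = 2cos(π(x_j − x_{j−1})) for j ≤ l−1 (x_0 = 0) and ζ_l^{1/2} = 2cos(π(2x_l − x_{l−1})). Then the product ζ_1^{1/2}·ζ_2^{1/2}⋯ζ_l^{1/2} is invariant under the affine Weyl group W_a(B_l), i.e., invariant under x_j ↦ x_j translations by coroots and under the Weyl group action generated by the reflections x ↦ x − (α_j^∨, x)α_j. -/
import Mathlib

/-- `y_l = ∏_j ζ_j^{1/2}`, in the standard coordinates of `ℝ^l` this is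
`∏_i 2 cos(π v_i)`. -/
noncomputable def yB (l : ℕ) (v : Fin l → ℝ) : ℝ := ∏ i, 2 * Real.cos (Real.pi * v i)

/-- The simple roots of `B_l`: `α_j = e_j - e_{j+1}` for `j < l`, `α_l = e_l`. -/
def alB (l : ℕ) (j : Fin l) : Fin l → ℝ := fun i =>
  if j.val + 1 < l then (if i = j then 1 else 0) - (if i.val = j.val + 1 then 1 else 0)
  else if i = j then 1 else 0

/-- The simple coroots of `B_l`: `α_j^∨ = e_j - e_{j+1}` for `j < l`, `α_l^∨ = 2 e_l`. -/
def coalB (l : ℕ) (j : Fin l) : Fin l → ℝ := fun i =>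
  if j.val + 1 < l then (if i = j then 1 else 0) - (if i.val = j.val + 1 then 1 else 0)
  else if i = j then 2 else 0

/-- Integer version of the coroots. -/
def czB (l : ℕ) (j : Fin l) : Fin l → ℤ := fun i =>
  if j.val + 1 < l then (if i = j then 1 else 0) - (if i.val = j.val + 1 then 1 else 0)
  else if i = j then 2 else 0

lemma czB_cast (l : ℕ) (j i : Fin l) : ((czB l j i : ℤ) : ℝ) = coalB l j i := by
  unfold czB coalB
  split <;> split_ifs <;> push_cast <;> ring

lemma czB_sum_even (l : ℕ) (j : Fin l) : 2 ∣ ∑ i, czB l j i := by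
  unfold czB
  by_cases h : j.val + 1 < l
  · simp only [if_pos h]
    have hc : ∀ i : Fin l, (i.val = j.val + 1) = (i = (⟨j.val + 1, h⟩ : Fin l)) := by
      intro i; simp [Fin.ext_iff]
    simp_rw [hc]
    rw [Finset.sum_sub_distrib]
    simp
  · simp [if_neg h]

lemma prod_neg_one_zpow {ι : Type*} (s : Finset ι) (f : ι → ℤ) :
    ∏ i ∈ s, ((-1 : ℝ) ^ f i) = (-1 : ℝ) ^ (∑ i ∈ s, f i) := by
  induction s using Finset.cons_induction with
  | empty => simp
  | cons a s ha ih => rw [Finset.prod_cons, Finset.sum_cons, ih, zpow_add₀ (by norm_num)]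

/-- Shift by integers multiplies by (-1)^sum. -/
lemma yB_shift (l : ℕ) (v : Fin l → ℝ) (k : Fin l → ℤ) :
    yB l (fun i => v i + (k i : ℝ)) = (-1 : ℝ) ^ (∑ i, k i) * yB l v := by
  unfold yB
  have h1 : ∀ i : Fin l, Real.pi * (v i + (k i : ℝ)) = Real.pi * v i + (k i : ℤ) * Real.pi := by
    intro i; ring
  simp_rw [h1, Real.cos_add_int_mul_pi]
  have h2 : ∀ i : Fin l, 2 * ((-1 : ℝ) ^ (k i) * Real.cos (Real.pi * v i)) =
      (-1 : ℝ) ^ (k i) * (2 * Real.cos (Real.pi * v i)) := fun i => by ring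
  simp_rw [h2]
  rw [Finset.prod_mul_distrib, prod_neg_one_zpow]

/-- `y_l = ζ_1^{1/2} ⋯ ζ_l^{1/2}` is invariant under the affine Weyl group
of `B_l`: invariant under translations by coroots and under the simple reflections
`x ↦ x - (α_j^∨, x) α_j`. -/
theorem stmt18 (l : ℕ) (hl : 2 ≤ l) (v : Fin l → ℝ) :
    (∀ m : Fin l → ℤ,
      yB l (fun i => v i + ∑ j, (m j : ℝ) * coalB l j i) = yB l v) ∧
    (∀ j : Fin l,
      yB l (fun i => v i - (∑ s, coalB l j s * v s) * alB l j i) = yB l v) := by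
  constructor
  · intro m
    have hk : ∀ i : Fin l, (∑ j, (m j : ℝ) * coalB l j i) =
        (((∑ j, m j * czB l j i : ℤ) : ℝ)) := by
      intro i
      push_cast
      exact Finset.sum_congr rfl fun j _ => by rw [czB_cast]
    simp_rw [hk]
    rw [yB_shift]
    have heven : 2 ∣ ∑ i : Fin l, ∑ j, m j * czB l j i := by
      rw [Finset.sum_comm]
      refine Finset.dvd_sum fun j _ => ?_
      rw [← Finset.mul_sum]
      exact Dvd.dvd.mul_left (czB_sum_even l j) _
    obtain ⟨t, ht⟩ := heven
    rw [ht, zpow_mul]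
    norm_num
  · intro j
    by_cases h : j.val + 1 < l
    · set j1 : Fin l := ⟨j.val + 1, h⟩ with hj1
      have hjj1 : j ≠ j1 := by
        intro he; have := congrArg Fin.val he; simp [hj1] at this
      have hc : ∀ i : Fin l, (i.val = j.val + 1) = (i = j1) := by
        intro i; simp [hj1, Fin.ext_iff]
      have hsum : (∑ s, coalB l j s * v s) = v j - v j1 := by
        unfold coalB
        simp_rw [if_pos h, hc, sub_mul, ite_mul, one_mul, zero_mul,
          Finset.sum_sub_distrib, Finset.sum_ite_eq', Finset.mem_univ, if_pos]
      have hal : ∀ i : Fin l, alB l j i =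
          (if i = j then 1 else 0) - (if i = j1 then 1 else 0) := by
        intro i; unfold alB; simp_rw [if_pos h, hc]
      have hf : ∀ i : Fin l,
          v i - (∑ s, coalB l j s * v s) * alB l j i = v (Equiv.swap j j1 i) := by
        intro i
        rw [hsum, hal]
        rcases eq_or_ne i j with rfl | hij
        · rw [Equiv.swap_apply_left, if_pos rfl, if_neg hjj1]; ring
        · rcases eq_or_ne i j1 with rfl | hij1
          · rw [Equiv.swap_apply_right, if_neg hij, if_pos rfl]; ring
          · rw [Equiv.swap_apply_of_ne_of_ne hij hij1, if_neg hij, if_neg hij1]; ring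
      simp_rw [hf]
      unfold yB
      exact Equiv.prod_comp (Equiv.swap j j1) (fun i => 2 * Real.cos (Real.pi * v i))
    · have hsum : (∑ s, coalB l j s * v s) = 2 * v j := by
        unfold coalB
        simp_rw [if_neg h, ite_mul, zero_mul, Finset.sum_ite_eq', Finset.mem_univ, if_pos]
      have hal : ∀ i : Fin l, alB l j i = if i = j then 1 else 0 := by
        intro i; unfold alB; rw [if_neg h]
      unfold yB
      refine Finset.prod_congr rfl fun i _ => ?_
      simp only [hsum, hal]
      rcases eq_or_ne i j with rfl | hij
      · rw [if_pos rfl]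
        have : Real.pi * (v i - 2 * v i * 1) = -(Real.pi * v i) := by ring
        rw [this, Real.cos_neg]
      · rw [if_neg hij]; ring_nf
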